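/- Let n ≥ 2, let μ₁,…,μₙ be atomless Borel probability measures on ℝ with cumulative distribution functions F_i(x) = μ_i((−∞,x]), and let g : ℝ² → ℝ be measurable such that (x₁,…,xₙ) ↦ g(min_i x_i, max_i x_i) is integrable with respect to the product measure μ₁ ⊗ ⋯ ⊗ μₙ. Then ∫_{ℝ^n} g(min_i x_i, max_i x_i) d(μ₁ ⊗ ⋯ ⊗ μₙ)(x) = Σ_{j ≠ k} ∫_ℝ ∫_{(−∞,v)} g(u,v) ∏_{i ∉ {j,k}} (F_i(v) − F_i(u)) dμ_j(u) dμ_k(v). -/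

import Mathlib

/-!
Since the laws are atomless, almost surely the coordinates are pairwise distinct, so up to a null
set the space splits into the regions where the minimum is attained only at `j` and the maximum
only at `k`, for ordered pairs `j ≠ k`. On such a region `g (min x) (max x) = g (x j) (x k)`, and
by Fubini, integrating out the other coordinates (each confined to `(x j, x k)`) contributes
`∏ (F_i (x k) - F_i (x j))`.
-/

open MeasureTheory Set

section InsertPair

variable {ι α : Type*} [DecidableEq ι] [MeasurableSpace α] {j k : ι}

def finTwoEquivPair (hjk : j ≠ k) : Fin 2 ≃ {i // i = j ∨ i = k} where
  toFun := ![⟨k, Or.inr rfl⟩, ⟨j, Or.inl rfl⟩]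
  invFun i := if i.1 = k then 0 else 1
  left_inv m := by fin_cases m <;> simp [hjk]
  right_inv := by rintro ⟨i, rfl | rfl⟩ <;> simp [hjk]

/-- The pair is ordered `(x k, x j)` so that Fubini integrates over `x k` last. -/
def insertPair (hjk : j ≠ k) :
    ((α × α) × ({i // ¬(i = j ∨ i = k)} → α)) ≃ᵐ (ι → α) :=
  ((MeasurableEquiv.piFinTwo fun _ => α).symm.prodCongr (.refl _)).trans
    (((MeasurableEquiv.piCongrLeft (fun _ => α) (finTwoEquivPair hjk)).prodCongr (.refl _)).trans
      (MeasurableEquiv.piEquivPiSubtypeProd (fun _ => α) _).symm)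

variable (hjk : j ≠ k) (v u : α) (z : {i // ¬(i = j ∨ i = k)} → α)

@[simp]
lemma insertPair_apply_left : insertPair hjk ((v, u), z) j = u := by
  rw [insertPair, MeasurableEquiv.trans_apply, MeasurableEquiv.trans_apply,
    MeasurableEquiv.piEquivPiSubtypeProd_symm_apply]
  beta_reduce
  rw [dif_pos (Or.inl rfl)]
  change MeasurableEquiv.piCongrLeft (fun _ => α) (finTwoEquivPair hjk) _
    (finTwoEquivPair hjk 1) = u
  rw [MeasurableEquiv.coe_piCongrLeft, Equiv.piCongrLeft_apply_apply]
  rfl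

@[simp]
lemma insertPair_apply_right : insertPair hjk ((v, u), z) k = v := by
  rw [insertPair, MeasurableEquiv.trans_apply, MeasurableEquiv.trans_apply,
    MeasurableEquiv.piEquivPiSubtypeProd_symm_apply]
  beta_reduce
  rw [dif_pos (Or.inr rfl)]
  change MeasurableEquiv.piCongrLeft (fun _ => α) (finTwoEquivPair hjk) _
    (finTwoEquivPair hjk 0) = v
  rw [MeasurableEquiv.coe_piCongrLeft, Equiv.piCongrLeft_apply_apply]
  rfl

@[simp]
lemma insertPair_apply_of_not {i : ι} (hi : ¬(i = j ∨ i = k)) :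
    insertPair hjk ((v, u), z) i = z ⟨i, hi⟩ := by
  rw [insertPair, MeasurableEquiv.trans_apply, MeasurableEquiv.trans_apply,
    MeasurableEquiv.piEquivPiSubtypeProd_symm_apply]
  beta_reduce
  rw [dif_neg hi]
  rfl

lemma measurePreserving_insertPair [Fintype ι] (μ : ι → Measure α) [∀ i, SigmaFinite (μ i)] :
    MeasurePreserving (insertPair hjk)
      (((μ k).prod (μ j)).prod (Measure.pi fun i : {i // ¬(i = j ∨ i = k)} => μ i))
      (Measure.pi μ) :=
  (measurePreserving_piEquivPiSubtypeProd μ _).symm _ |>.comp <|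
    ((measurePreserving_piCongrLeft (fun i : {i // i = j ∨ i = k} => μ i)
      (finTwoEquivPair hjk)).prod (.id _)).comp <|
    ((measurePreserving_piFinTwo fun m => μ (finTwoEquivPair hjk m)).symm _).prod (.id _)

end InsertPair

lemma measure_prod_diagonal_eq_zero {α : Type*} [MeasurableSpace α] [MeasurableEq α]
    (μ ν : Measure α) [SFinite ν] [NullSingletonClass ν] : μ.prod ν (diagonal α) = 0 := by
  refine (Measure.measure_prod_null measurableSet_diagonal).2 (.of_forall fun a => ?_)
  have : Prod.mk a ⁻¹' diagonal α = {a} := by ext; simp [eq_comm]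
  simp [this]

section Injective

variable {ι α : Type*} [Fintype ι] [MeasurableSpace α] [MeasurableEq α]
  (μ : ι → Measure α) [∀ i, SigmaFinite (μ i)] [∀ i, NullSingletonClass (μ i)]

lemma measure_pi_setOf_apply_eq_apply [DecidableEq ι] {j k : ι} (hjk : j ≠ k) :
    Measure.pi μ {x | x j = x k} = 0 := by
  have hpre : insertPair hjk ⁻¹' {x : ι → α | x j = x k} = diagonal α ×ˢ univ := by
    ext ⟨⟨v, u⟩, z⟩
    simp [eq_comm]
  rw [← (measurePreserving_insertPair hjk μ).measure_preimage
    (measurableSet_eq_fun (measurable_pi_apply j) (measurable_pi_apply k)).nullMeasurableSet,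
    hpre, Measure.prod_prod, measure_prod_diagonal_eq_zero, zero_mul]

lemma ae_injective_pi : ∀ᵐ x ∂Measure.pi μ, Function.Injective x := by
  classical
  have hpair : ∀ j k : ι, ∀ᵐ x ∂Measure.pi μ, x j = x k → j = k := fun j k => by
    by_cases hjk : j = k
    · exact .of_forall fun _ _ => hjk
    · filter_upwards [measure_eq_zero_iff_ae_notMem.1 (measure_pi_setOf_apply_eq_apply μ hjk)]
        with x hx hxjk using absurd hxjk hx
  filter_upwards [ae_all_iff.2 fun j => ae_all_iff.2 (hpair j)] with x hx j k using hx j k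

end Injective

section MinMax

variable {ι β : Type*} [LinearOrder β]

def minMaxSet (j k : ι) : Set (ι → β) :=
  {x | (∀ i, i ≠ j → x j < x i) ∧ ∀ i, i ≠ k → x i < x k}

variable {j k : ι} {x : ι → β}

lemma eq_of_mem_minMaxSet {j' k' : ι} (hx : x ∈ minMaxSet j k) (hx' : x ∈ minMaxSet j' k') :
    j = j' ∧ k = k' := by
  constructor
  · by_contra h
    exact lt_asymm (hx.1 j' (Ne.symm h)) (hx'.1 j h)
  · by_contra h
    exact lt_asymm (hx.2 k' (Ne.symm h)) (hx'.2 k h)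

variable [Fintype ι]

lemma inf'_eq_of_mem_minMaxSet (hne : (Finset.univ : Finset ι).Nonempty)
    (hx : x ∈ minMaxSet j k) : Finset.univ.inf' hne x = x j :=
  le_antisymm (Finset.inf'_le _ (Finset.mem_univ j)) <| Finset.le_inf' _ _ fun i _ => by
    rcases eq_or_ne i j with rfl | hij
    exacts [le_rfl, (hx.1 i hij).le]

lemma sup'_eq_of_mem_minMaxSet (hne : (Finset.univ : Finset ι).Nonempty)
    (hx : x ∈ minMaxSet j k) : Finset.univ.sup' hne x = x k :=
  le_antisymm (Finset.sup'_le _ _ fun i _ => by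
    rcases eq_or_ne i k with rfl | hik
    exacts [le_rfl, (hx.2 i hik).le]) (Finset.le_sup' _ (Finset.mem_univ k))

lemma exists_mem_minMaxSet [Nontrivial ι] (hx : Function.Injective x) :
    ∃ j k, j ≠ k ∧ x ∈ minMaxSet j k := by
  obtain ⟨j, -, hj⟩ := Finset.exists_min_image Finset.univ x Finset.univ_nonempty
  obtain ⟨k, -, hk⟩ := Finset.exists_max_image Finset.univ x Finset.univ_nonempty
  have hmin : ∀ i, i ≠ j → x j < x i := fun i hij =>
    (hj i (Finset.mem_univ i)).lt_of_ne (hx.ne hij.symm)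
  have hmax : ∀ i, i ≠ k → x i < x k := fun i hik =>
    (hk i (Finset.mem_univ i)).lt_of_ne (hx.ne hik)
  obtain ⟨i, hij⟩ := exists_ne j
  refine ⟨j, k, fun hjk => ?_, hmin, hmax⟩
  subst hjk
  exact lt_asymm (hmin i hij) (hmax i hij)

lemma sum_indicator_minMaxSet [DecidableEq ι] [Nontrivial ι] {M : Type*} [AddCommMonoid M]
    (f : (ι → β) → M) (hx : Function.Injective x) :
    ∑ j, ∑ k ∈ Finset.univ.erase j, (minMaxSet j k).indicator f x = f x := by
  obtain ⟨j, k, hjk, hxjk⟩ := exists_mem_minMaxSet hx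
  rw [Finset.sum_eq_single j, Finset.sum_eq_single_of_mem k
    (Finset.mem_erase.2 ⟨hjk.symm, Finset.mem_univ k⟩), indicator_of_mem hxjk]
  · intro k' _ hk'
    exact indicator_of_notMem (fun h => hk' (eq_of_mem_minMaxSet hxjk h).2.symm) f
  · intro j' _ hj'
    exact Finset.sum_eq_zero fun k' _ =>
      indicator_of_notMem (fun h => hj' (eq_of_mem_minMaxSet hxjk h).1.symm) f
  · simp

end MinMax

lemma measurableSet_minMaxSet {ι : Type*} [Countable ι] (j k : ι) :
    MeasurableSet (minMaxSet j k : Set (ι → ℝ)) := by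
  unfold minMaxSet
  measurability

lemma measureReal_Ioo_eq_sub (μ : Measure ℝ) [IsFiniteMeasure μ] [NullSingletonClass μ]
    {u v : ℝ} (huv : u ≤ v) : μ.real (Ioo u v) = μ.real (Iic v) - μ.real (Iic u) := by
  rw [measureReal_congr Ioo_ae_eq_Ioc, ← Iic_union_Ioc_eq_Iic huv,
    measureReal_union (Iic_disjoint_Ioc le_rfl) measurableSet_Ioc, add_sub_cancel_left]

section PairIntegral

variable {ι : Type*} [DecidableEq ι] {j k : ι}

lemma insertPair_mem_minMaxSet_iff (hjk : j ≠ k) (v u : ℝ) (z : {i // ¬(i = j ∨ i = k)} → ℝ) :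
    insertPair hjk ((v, u), z) ∈ minMaxSet j k ↔ u < v ∧ z ∈ univ.pi fun _ => Ioo u v := by
  constructor
  · intro hx
    refine ⟨by simpa using hx.1 k hjk.symm, fun i _ => ⟨?_, ?_⟩⟩
    · simpa [i.2] using hx.1 i (fun h => i.2 (.inl h))
    · simpa [i.2] using hx.2 i (fun h => i.2 (.inr h))
  · rintro ⟨huv, hz⟩
    refine ⟨fun i hij => ?_, fun i hik => ?_⟩
    · by_cases hik : i = k
      · simpa [hik] using huv
      · simpa [insertPair_apply_of_not hjk v u z (i := i) (by tauto)] using (hz _ trivial).1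
    · by_cases hij : i = j
      · simpa [hij] using huv
      · simpa [insertPair_apply_of_not hjk v u z (i := i) (by tauto)] using (hz _ trivial).2

variable [Fintype ι] (μ : ι → Measure ℝ) [∀ i, IsFiniteMeasure (μ i)]
  [∀ i, NullSingletonClass (μ i)]

lemma integral_indicator_minMaxSet_insertPair (hjk : j ≠ k) (g : ℝ → ℝ → ℝ) (v u : ℝ) :
    ∫ z, (minMaxSet j k).indicator (fun x => g (x j) (x k)) (insertPair hjk ((v, u), z))
        ∂Measure.pi (fun i : {i // ¬(i = j ∨ i = k)} => μ i)
      = (Iio v).indicator (fun u => g u v * ∏ i ∈ (Finset.univ.erase j).erase k,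
          ((μ i (Iic v)).toReal - (μ i (Iic u)).toReal)) u := by
  by_cases huv : u < v
  · have hcube : (fun z => (minMaxSet j k).indicator (fun x => g (x j) (x k))
        (insertPair hjk ((v, u), z))) = (univ.pi fun _ => Ioo u v).indicator (fun _ => g u v) := by
      ext z
      by_cases hz : z ∈ univ.pi fun _ => Ioo u v
      · simp [indicator_of_mem, (insertPair_mem_minMaxSet_iff hjk v u z).2 ⟨huv, hz⟩, hz]
      · simp [indicator_of_notMem, insertPair_mem_minMaxSet_iff, hz]
    rw [hcube, integral_indicator_const _ (MeasurableSet.univ_pi fun _ => measurableSet_Ioo),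
      indicator_of_mem (mem_Iio.2 huv), measureReal_def, Measure.pi_pi, ENNReal.toReal_prod,
      smul_eq_mul, mul_comm]
    congr 1
    rw [Finset.prod_subtype (p := fun i => ¬(i = j ∨ i = k)) _ (fun i => by simp; tauto)]
    exact Finset.prod_congr rfl fun i _ => measureReal_Ioo_eq_sub (μ i) huv.le
  · simp [indicator_of_notMem, insertPair_mem_minMaxSet_iff, huv]

theorem setIntegral_minMaxSet_eq (hjk : j ≠ k) (g : ℝ → ℝ → ℝ)
    (hint : IntegrableOn (fun x => g (x j) (x k)) (minMaxSet j k) (Measure.pi μ)) :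
    ∫ x in minMaxSet j k, g (x j) (x k) ∂Measure.pi μ
      = ∫ v, ∫ u in Iio v, g u v * ∏ i ∈ (Finset.univ.erase j).erase k,
          ((μ i (Iic v)).toReal - (μ i (Iic u)).toReal) ∂μ j ∂μ k := by
  set F := (minMaxSet j k).indicator fun x : ι → ℝ => g (x j) (x k)
  have hmp := measurePreserving_insertPair hjk μ
  have hF : Integrable (fun w => F (insertPair hjk w)) _ :=
    (hmp.integrable_comp_emb (insertPair hjk).measurableEmbedding).2
      ((integrable_indicator_iff (measurableSet_minMaxSet j k)).2 hint)
  have hH := hF.integral_prod_left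
  simp only [F, integral_indicator_minMaxSet_insertPair] at hH
  rw [← integral_indicator (measurableSet_minMaxSet j k), ← hmp.integral_comp',
    integral_prod _ hF]
  simp only [F, integral_indicator_minMaxSet_insertPair]
  rw [integral_prod _ hH]
  simp only [integral_indicator measurableSet_Iio]

end PairIntegral

theorem integral_pi_eq_sum_setIntegral_minMaxSet {ι E : Type*} [Fintype ι] [DecidableEq ι]
    [Nontrivial ι] [NormedAddCommGroup E] [NormedSpace ℝ E] (μ : ι → Measure ℝ)
    [∀ i, SigmaFinite (μ i)] [∀ i, NullSingletonClass (μ i)] {f : (ι → ℝ) → E}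
    (hf : Integrable f (Measure.pi μ)) :
    ∫ x, f x ∂Measure.pi μ
      = ∑ j, ∑ k ∈ Finset.univ.erase j, ∫ x in minMaxSet j k, f x ∂Measure.pi μ := by
  have hind : ∀ j k, Integrable ((minMaxSet j k).indicator f) (Measure.pi μ) := fun j k =>
    hf.indicator (measurableSet_minMaxSet j k)
  calc ∫ x, f x ∂Measure.pi μ
      = ∫ x, ∑ j, ∑ k ∈ Finset.univ.erase j, (minMaxSet j k).indicator f x ∂Measure.pi μ :=
        integral_congr_ae <| (ae_injective_pi μ).mono fun x hx =>
          (sum_indicator_minMaxSet f hx).symm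
    _ = _ := by
        rw [integral_finsetSum _ fun j _ => integrable_finsetSum _ fun k _ => hind j k]
        simp only [integral_finsetSum _ fun k _ => hind _ k,
          integral_indicator (measurableSet_minMaxSet _ _)]

/-- If `X₁,…,Xₙ` (`n ≥ 2`) are independent with atomless laws `μ₁,…,μₙ` of c.d.f.s
`F₁,…,Fₙ`, and `g(min_i X_i, max_i X_i)` is integrable, then
`E[g(min_i X_i, max_i X_i)]
  = Σ_{j≠k} ∫ ∫_{u<v} g(u,v) ∏_{i∉{j,k}} (F_i(v)−F_i(u)) dμ_j(u) dμ_k(v)`. -/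
theorem expectation_g_min_max_independent (n : ℕ) (hn : 2 ≤ n) (μ : Fin n → Measure ℝ)
    [∀ i, IsProbabilityMeasure (μ i)] [∀ i, NullSingletonClass (μ i)] (g : ℝ → ℝ → ℝ)
    (hint : Integrable
      (fun x : Fin n → ℝ =>
        g (Finset.univ.inf' ⟨⟨0, by omega⟩, Finset.mem_univ _⟩ x)
          (Finset.univ.sup' ⟨⟨0, by omega⟩, Finset.mem_univ _⟩ x))
      (Measure.pi μ)) :
    (∫ x : Fin n → ℝ,
        g (Finset.univ.inf' ⟨⟨0, by omega⟩, Finset.mem_univ _⟩ x)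
          (Finset.univ.sup' ⟨⟨0, by omega⟩, Finset.mem_univ _⟩ x)
        ∂(Measure.pi μ))
      = ∑ j : Fin n, ∑ k ∈ Finset.univ.erase j,
          ∫ v, (∫ u in Set.Iio v,
              g u v *
                ∏ i ∈ (Finset.univ.erase j).erase k,
                  ((μ i (Set.Iic v)).toReal - (μ i (Set.Iic u)).toReal)
            ∂(μ j)) ∂(μ k) := by
  have : Nontrivial (Fin n) := Fin.nontrivial_iff_two_le.2 hn
  rw [integral_pi_eq_sum_setIntegral_minMaxSet μ hint]
  refine Finset.sum_congr rfl fun j _ => Finset.sum_congr rfl fun k hk => ?_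
  have hminmax : EqOn (fun x => g (Finset.univ.inf' Finset.univ_nonempty x)
      (Finset.univ.sup' Finset.univ_nonempty x)) (fun x => g (x j) (x k)) (minMaxSet j k) :=
    fun x hx =>
    congrArg₂ g (inf'_eq_of_mem_minMaxSet _ hx) (sup'_eq_of_mem_minMaxSet _ hx)
  rw [setIntegral_congr_fun (measurableSet_minMaxSet j k) hminmax]
  exact setIntegral_minMaxSet_eq μ (Finset.ne_of_mem_erase hk).symm g
    (hint.integrableOn.congr_fun hminmax (measurableSet_minMaxSet j k))
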